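/- The 2×2 relaxation map on the (y,z)-plane, L_T(M) = (e^{−T/T₂} y, 1 − e^{−T/T₁} + e^{−T/T₁} z), maps the closed unit disk {y² + z² ≤ 1} into itself whenever T ≥ 0 and 0 < T₂ ≤ 2T₁; in particular the Bloch ball is invariant under free relaxation when T₂ ≤ 2T₁. -/
import Mathlib

theorem bloch_ball_invariant (T₁ T₂ T y z : ℝ)
    (hT₁ : 0 < T₁) (hT₂ : 0 < T₂) (h : T₂ ≤ 2 * T₁) (hT : 0 ≤ T)
    (hM : y ^ 2 + z ^ 2 ≤ 1) :
    (Real.exp (-T / T₂) * y) ^ 2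
      + (1 - Real.exp (-T / T₁) + Real.exp (-T / T₁) * z) ^ 2 ≤ 1 := by
  set a := Real.exp (-T / T₂) with ha
  set b := Real.exp (-T / T₁) with hb
  have hb0 : 0 < b := Real.exp_pos _
  have hb1 : b ≤ 1 := Real.exp_le_one_iff.mpr (by
    apply div_nonpos_of_nonpos_of_nonneg <;> linarith)
  have hab : a ^ 2 ≤ b := by
    rw [ha, hb, ← Real.exp_nat_mul]
    apply Real.exp_le_exp.mpr
    push_cast
    rw [mul_div_assoc', div_le_div_iff₀ hT₂ hT₁]
    nlinarith
  have hz : z ^ 2 ≤ 1 := by nlinarith [sq_nonneg y]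
  nlinarith [sq_nonneg (1 - z), sq_nonneg y, mul_nonneg hb0.le (sq_nonneg y),
    mul_le_mul_of_nonneg_right hab (sq_nonneg y),
    mul_nonneg (mul_nonneg hb0.le (sub_nonneg.mpr hb1)) (sq_nonneg (1 - z))]
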